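/- The monoid of initial exponents of invariants of A_3 on 3 variables with respect to the lexicographic order has infinitely many irreducible elements. Concretely, the monoid M of vectors u ∈ ℕ^3 satisfying (u_1-u_2, u_2-u_3, u_3-u_1) ≥_lex 0 and (u_1-u_3, u_2-u_1, u_3-u_2) ≥_lex 0 has infinitely many irreducible elements. -/

import Mathlib

/-- `(a,b,c) ≥_lex (0,0,0)` for integers. -/
def lex3Z (a b c : ℤ) : Prop := 0 < a ∨ (a = 0 ∧ 0 < b) ∨ (a = 0 ∧ b = 0 ∧ 0 ≤ c)

/-- The monoid of initial exponents of A₃-invariants for the lexicographic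
order x₁ > x₂ > x₃. -/
def monA3 : Set (Fin 3 → ℕ) :=
  {u | lex3Z ((u 0 : ℤ) - u 1) ((u 1 : ℤ) - u 2) ((u 2 : ℤ) - u 0) ∧
       lex3Z ((u 0 : ℤ) - u 2) ((u 1 : ℤ) - u 0) ((u 2 : ℤ) - u 1)}

/-!
The vectors `(k + 1, 0, k)` are irreducible. A nonzero element `v` of the monoid with `v 1 = 0`
fails the second lexicographic condition unless `v 2 < v 0`, so each of two nonzero summands
with middle coordinate `0` contributes at least `1` to the gap `u 0 - u 2`, while that gap is
exactly `1` for `(k + 1, 0, k)`.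
-/

lemma lt_of_mem_monA3_of_apply_one_eq_zero {v : Fin 3 → ℕ} (hv : v ∈ monA3) (h1 : v 1 = 0)
    (hne : v ≠ 0) : v 2 < v 0 := by
  obtain ⟨-, hlex⟩ := hv
  rcases hlex with hpos | ⟨-, hpos⟩ | ⟨h02, h10, -⟩
  · omega
  · omega
  · refine absurd (funext fun i => ?_) hne
    fin_cases i <;> simp <;> omega

lemma vec_succ_zero_mem_monA3 (k : ℕ) : ![k + 1, 0, k] ∈ monA3 :=
  ⟨Or.inl (by simp), Or.inl (by simp)⟩

lemma not_exists_add_eq_vec_succ_zero (k : ℕ) :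
    ¬ ∃ a ∈ monA3, ∃ b ∈ monA3, a ≠ 0 ∧ b ≠ 0 ∧ ![k + 1, 0, k] = a + b := by
  rintro ⟨a, ha, b, hb, ha0, hb0, hsum⟩
  have h0 := congrFun hsum 0
  have h1 := congrFun hsum 1
  have h2 := congrFun hsum 2
  simp only [Fin.isValue, Matrix.cons_val, Pi.add_apply] at h0 h1 h2
  have ha := lt_of_mem_monA3_of_apply_one_eq_zero ha (by omega) ha0
  have hb := lt_of_mem_monA3_of_apply_one_eq_zero hb (by omega) hb0
  omega

/-- this monoid has infinitely many irreducible elements. -/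
theorem stmt_7 :
    {u : Fin 3 → ℕ | u ∈ monA3 ∧ u ≠ 0 ∧
      ¬ ∃ a ∈ monA3, ∃ b ∈ monA3, a ≠ 0 ∧ b ≠ 0 ∧ u = a + b}.Infinite := by
  refine Set.infinite_of_injective_forall_mem (f := fun k : ℕ => ![k + 1, 0, k]) ?_ fun k => ?_
  · intro i j h
    simpa using congrFun h 2
  · refine ⟨vec_succ_zero_mem_monA3 k, fun h => ?_, not_exists_add_eq_vec_succ_zero k⟩
    simpa using congrFun h 0
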